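/- Every trace of the set of canonical models of a process P is a trace of P: tracesH(can(P)) ⊆ traces(P), where can(P) is the set of token-added canonical models cmod^•(P, ρ) over all well-typed input schedules ρ. -/

import Mathlib

/-! ## Event systems -/

/-- Event systems: labeled transition systems. -/
structure ES (S E : Type) where
  trans : S → E → S → Prop

namespace ES

/-- Extension of the transition relation to finite sequences of events. -/
inductive mtrans {S E : Type} (M : ES S E) : S → List E → S → Prop
  | nil (s : S) : mtrans M s [] s
  | snoc {s s' s'' : S} {τ : List E} {e : E} :
      mtrans M s τ s' → M.trans s' e s'' → mtrans M s (τ ++ [e]) s''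

/-- The traces of an event system starting from a set of initial states. -/
def traces {S E : Type} (M : ES S E) (I : Set S) : Set (List E) :=
  {τ | ∃ s ∈ I, ∃ s', M.mtrans s τ s'}

/-- Traces starting from a single state. -/
def tracesFrom {S E : Type} (M : ES S E) (s : S) : Set (List E) :=
  M.traces {s}

end ES

/-! ## Chunks and heaps -/

/-- Chunks: I/O permissions `bio(t, v, w, t')` and tokens `token(t)`. -/
inductive Chunk (B V Pl : Type) : Type
  | bio (b : B) (t : Pl) (v w : V) (t' : Pl)
  | token (t : Pl)

/-- Heaps are (possibly infinite) multisets of chunks, i.e. functions to `ℕ∞`. -/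
abbrev Heap (B V Pl : Type) := Chunk B V Pl → ℕ∞

open Classical in
/-- The singleton heap containing one chunk. -/
noncomputable def Heap.single {B V Pl : Type} (c : Chunk B V Pl) : Heap B V Pl :=
  fun c' => if c' = c then 1 else 0

/-- Well-typedness of a chunk w.r.t. a typing function `Ty`. -/
def Chunk.wellTyped {B V Pl : Type} (Ty : B → V → Set V) : Chunk B V Pl → Prop
  | .bio b _ v w _ => w ∈ Ty b v
  | .token _ => True

/-! ## Assertions (coinductive, as an M-type) -/

/-- Heads of the assertion functor. -/
inductive AssnHead (B V Pl : Type) : Type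
  | bool (b : Bool)
  | chunk (c : Chunk B V Pl)
  | star
  | exv
  | expl

/-- Arities (branching types) of the assertion functor. -/
def AssnAr (B V Pl : Type) : AssnHead B V Pl → Type
  | .bool _ => Empty
  | .chunk _ => Empty
  | .star => Bool
  | .exv => V
  | .expl => Pl

/-- The assertion polynomial functor. -/
def AssnF (B V Pl : Type) : PFunctor := ⟨AssnHead B V Pl, AssnAr B V Pl⟩

/-- Coinductive separation logic assertions:
`φ ::=ν b | c | φ₁ ⋆ φ₂ | ∃v. φ | ∃t. φ`. -/
def Assn (B V Pl : Type) : Type := (AssnF B V Pl).M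

namespace Assn

variable {B V Pl : Type}

/-- Boolean assertion. -/
def mkBool (b : Bool) : Assn B V Pl := PFunctor.M.mk ⟨.bool b, fun e => e.elim⟩

/-- Chunk assertion. -/
def mkChunk (c : Chunk B V Pl) : Assn B V Pl := PFunctor.M.mk ⟨.chunk c, fun e => e.elim⟩

/-- Separating conjunction. -/
def star (φ ψ : Assn B V Pl) : Assn B V Pl :=
  PFunctor.M.mk ⟨.star, fun x : Bool => if x then φ else ψ⟩

/-- Existential quantification over values. -/
def exv (f : V → Assn B V Pl) : Assn B V Pl := PFunctor.M.mk ⟨.exv, f⟩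

/-- Existential quantification over places. -/
def expl (f : Pl → Assn B V Pl) : Assn B V Pl := PFunctor.M.mk ⟨.expl, f⟩

end Assn

/-- One step of the satisfaction relation. -/
def SatF {B V Pl : Type} (Ty : B → V → Set V)
    (R : Heap B V Pl → Assn B V Pl → Prop) (h : Heap B V Pl) (φ : Assn B V Pl) : Prop :=
  match PFunctor.M.dest φ with
  | ⟨.bool b, _⟩ => b = true
  | ⟨.chunk c, _⟩ => 0 < h c ∧ c.wellTyped Ty
  | ⟨.star, f⟩ => ∃ h1 h2, h = h1 + h2 ∧ R h1 (f true) ∧ R h2 (f false)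
  | ⟨.exv, f⟩ => ∃ v, R h (f v)
  | ⟨.expl, f⟩ => ∃ t, R h (f t)

/-- Coinductive satisfaction relation `h ⊨ φ`, as the greatest fixed point
of `SatF` (defined as the union of all post-fixed points). -/
def sat {B V Pl : Type} (Ty : B → V → Set V) (h : Heap B V Pl) (φ : Assn B V Pl) : Prop :=
  ∃ R, (∀ h' φ', R h' φ' → SatF Ty R h' φ') ∧ R h φ

/-! ## Heap transition system -/

/-- The heap transition system over `Option Heap` (`none` is the chaotic state ⊥),
with rules Bio, Contradict, and Chaos. -/
inductive HTrans {B V Pl : Type} (Ty : B → V → Set V) :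
    Option (Heap B V Pl) → B × V × V → Option (Heap B V Pl) → Prop
  | bio {b : B} {v w : V} {t t' : Pl} {h : Heap B V Pl} :
      w ∈ Ty b v →
      HTrans Ty (some (Heap.single (.token t) + Heap.single (.bio b t v w t') + h)) (b, v, w)
        (some (Heap.single (.token t') + h))
  | contradict {b : B} {v w w' : V} {t t' : Pl} {h : Heap B V Pl} :
      w ≠ w' → w ∈ Ty b v → w' ∈ Ty b v →
      HTrans Ty (some (Heap.single (.token t) + Heap.single (.bio b t v w t') + h)) (b, v, w')
        none
  | chaos {b : B} {v w : V} : w ∈ Ty b v → HTrans Ty none (b, v, w) none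

/-- The heap transition system as an event system. -/
def hES {B V Pl : Type} (Ty : B → V → Set V) : ES (Option (Heap B V Pl)) (B × V × V) :=
  ⟨HTrans Ty⟩

/-- Traces executable in all heaps of a set of heaps. -/
def tracesH {B V Pl : Type} (Ty : B → V → Set V) (H : Set (Heap B V Pl)) :
    Set (List (B × V × V)) :=
  {τ | ∀ h ∈ H, τ ∈ (hES Ty).tracesFrom (some h)}

/-- Traces of an assertion: traces executable in all its heap models. -/
def tracesHA {B V Pl : Type} (Ty : B → V → Set V) (φ : Assn B V Pl) :
    Set (List (B × V × V)) :=
  tracesH Ty {h | sat Ty h φ}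

/-! ## Processes (coinductive, as an M-type) -/

/-- Heads of the process functor. -/
inductive ProcHead (B V : Type) : Type
  | null
  | pre (b : B) (v : V)
  | choice

/-- Arities of the process functor. -/
def ProcAr (B V : Type) : ProcHead B V → Type
  | .null => Empty
  | .pre _ _ => V
  | .choice => Bool

/-- The process polynomial functor. -/
def ProcF (B V : Type) : PFunctor := ⟨ProcHead B V, ProcAr B V⟩

/-- Coinductive processes: `P ::=ν Null | bio(v, z).P | P₁ ⊕ P₂`. -/
def Proc (B V : Type) : Type := (ProcF B V).M

namespace Proc

variable {B V : Type}

/-- The inactive process. -/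
def null : Proc B V := PFunctor.M.mk ⟨.null, fun e => e.elim⟩

/-- Prefixing with an I/O operation, binding the input in the continuation. -/
def pre (b : B) (v : V) (k : V → Proc B V) : Proc B V := PFunctor.M.mk ⟨.pre b v, k⟩

/-- Binary choice. -/
def choice (P Q : Proc B V) : Proc B V :=
  PFunctor.M.mk ⟨.choice, fun x : Bool => if x then P else Q⟩

end Proc

/-- Operational semantics of processes (rules Pref and Choice). -/
inductive PTrans {B V : Type} (Ty : B → V → Set V) : Proc B V → B × V × V → Proc B V → Prop
  | pref {P : Proc B V} {b : B} {v w : V} {k : V → Proc B V} :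
      w ∈ Ty b v → PFunctor.M.dest P = ⟨.pre b v, k⟩ → PTrans Ty P (b, v, w) (k w)
  | chl {P P' : Proc B V} {a : B × V × V} {f : Bool → Proc B V} :
      PFunctor.M.dest P = ⟨.choice, f⟩ → PTrans Ty (f true) a P' → PTrans Ty P a P'
  | chr {P P' : Proc B V} {a : B × V × V} {f : Bool → Proc B V} :
      PFunctor.M.dest P = ⟨.choice, f⟩ → PTrans Ty (f false) a P' → PTrans Ty P a P'

/-- The process operational semantics as an event system. -/
def pES {B V : Type} (Ty : B → V → Set V) : ES (Proc B V) (B × V × V) := ⟨PTrans Ty⟩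

/-- Countable (ℕ-indexed) choice, defined corecursively from binary choice. -/
def vchoice {B V : Type} (f : ℕ → Proc B V) : Proc B V :=
  PFunctor.M.corec
    (fun s : Proc B V ⊕ ℕ =>
      match s with
      | .inl p => ⟨(PFunctor.M.dest p).1, fun x => Sum.inl ((PFunctor.M.dest p).2 x)⟩
      | .inr n => ⟨.choice, fun x : Bool => if x then Sum.inl (f n) else Sum.inr (n + 1)⟩)
    (Sum.inr 0)

/-! ## Embedding of processes into assertions -/

/-- States of the corecursion defining the embedding `emb`. -/
inductive EmbSt (B V Pl : Type) : Type
  | proc (P : Proc B V) (t : Pl)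
  | ex1 (b : B) (v : V) (k : V → Proc B V) (t t' : Pl)
  | star1 (b : B) (v : V) (k : V → Proc B V) (t t' : Pl) (z : V)
  | leafChunk (c : Chunk B V Pl)

/-- One step of the corecursion defining the embedding `emb`. -/
def embStep {B V Pl : Type} : EmbSt B V Pl → (AssnF B V Pl).Obj (EmbSt B V Pl)
  | .proc P t =>
    match PFunctor.M.dest P with
    | ⟨.null, _⟩ => ⟨.bool true, fun e => e.elim⟩
    | ⟨.pre b v, k⟩ => ⟨.expl, fun t' => .ex1 b v k t t'⟩
    | ⟨.choice, f⟩ => ⟨.star, fun x : Bool => .proc (f x) t⟩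
  | .ex1 b v k t t' => ⟨.exv, fun z => .star1 b v k t t' z⟩
  | .star1 b v k t t' z =>
      ⟨.star, fun x : Bool => if x then .leafChunk (.bio b t v z t') else .proc (k z) t'⟩
  | .leafChunk c => ⟨.chunk c, fun e => e.elim⟩

/-- The embedding `emb(P, t)` of a process and a place into an assertion:
`emb(Null, t) = true`, `emb(bio(v,z).P, t) = ∃t',z'. bio(t,v,z',t') ⋆ emb(P[z'/z], t')`,
`emb(P₁ ⊕ P₂, t) = emb(P₁, t) ⋆ emb(P₂, t)`. -/
def embA {B V Pl : Type} (P : Proc B V) (t : Pl) : Assn B V Pl :=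
  PFunctor.M.corec embStep (.proc P t)

/-- The process assertion `emb(P) = ∃t. token(t) ⋆ emb(P, t)`. -/
def procAssn {B V : Type} (Pl : Type) (P : Proc B V) : Assn B V Pl :=
  Assn.expl (fun t => Assn.star (Assn.mkChunk (.token t)) (embA P t))

/-- ℕ-indexed iterated separating conjunction, defined corecursively. -/
def AllStar {B V Pl : Type} (f : ℕ → Assn B V Pl) : Assn B V Pl :=
  PFunctor.M.corec
    (fun s : Assn B V Pl ⊕ ℕ =>
      match s with
      | .inl a => ⟨(PFunctor.M.dest a).1, fun x => Sum.inl ((PFunctor.M.dest a).2 x)⟩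
      | .inr n => ⟨.star, fun x : Bool => if x then Sum.inl (f n) else Sum.inr (n + 1)⟩)
    (Sum.inr 0)

/-! ## I/O-guarded event systems and their translation to processes -/

/-- An I/O-guarded event system: guards depend only on the state and the output,
updates compute the next state from output and input. -/
structure IOGES (B V S : Type) where
  guard : B → V → S → Prop
  update : B → V → V → S → S

/-- The event system associated with an I/O-guarded event system:
`s →bio(v,w) s'` iff the guard holds, `w ∈ Ty(bio, v)`, and `s' = U(s)`. -/
def IOGES.es {B V S : Type} (G : IOGES B V S) (Ty : B → V → Set V) : ES S (B × V × V) :=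
  ⟨fun s a s' => G.guard a.1 a.2.1 s ∧ a.2.2 ∈ Ty a.1 a.2.1 ∧
      s' = G.update a.1 a.2.1 a.2.2 s⟩

/-- States of the corecursion defining `proc(G, s)`. -/
inductive PrSt (S : Type) : Type
  | spine (n : ℕ) (s : S)
  | item (n : ℕ) (s : S)

open Classical in
/-- The corecursive translation `proc(G, s)` of an I/O-guarded event system into
a process: the countable choice over all `bio ∈ Bios` and outputs `v` whose guard
holds in `s` of the prefixed processes `bio(v, z). proc(G, U_{bio(v,z)}(s))`,
via an enumeration `e` of the pairs `(bio, v)`. -/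
noncomputable def procOf {B V S : Type} (e : ℕ → B × V) (G : IOGES B V S) (s : S) :
    Proc B V :=
  PFunctor.M.corec
    (fun st : PrSt S =>
      match st with
      | .spine n s => ⟨.choice, fun x : Bool => if x then .item n s else .spine (n + 1) s⟩
      | .item n s =>
          if G.guard (e n).1 (e n).2 s then
            ⟨.pre (e n).1 (e n).2, fun w => .spine 0 (G.update (e n).1 (e n).2 w s)⟩
          else ⟨.null, fun x => x.elim⟩)
    (.spine 0 s)

/-! ## Canonical heap models -/

open Classical in
/-- The I/O permission (as a singleton heap, or the empty heap) found at position
`pos` of process `P` under input schedule `ρ`, with previous place `pp`,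
current position `cp`, and traversed trace `τ`. -/
noncomputable def pm {B V : Type} (ρ : List (B × V × V) → B → V → V) :
    Proc B V → List (B × V × V) → List Bool → List Bool → List Bool →
      Heap B V (List Bool)
  | P, τ, pp, cp, [] =>
    (match PFunctor.M.dest P with
     | ⟨.pre b v, _⟩ => Heap.single (Chunk.bio b pp v (ρ τ b v) (cp ++ [true]))
     | _ => 0)
  | P, τ, pp, cp, d :: pos =>
    (match PFunctor.M.dest P, d with
     | ⟨.pre b v, k⟩, true =>
         pm ρ (k (ρ τ b v)) (τ ++ [(b, v, ρ τ b v)]) (cp ++ [true]) (cp ++ [true]) pos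
     | ⟨.choice, f⟩, d' => pm ρ (f d') τ pp (cp ++ [d']) pos
     | _, _ => 0)

/-- Pointwise (possibly infinite) sum of a family of heaps. -/
noncomputable def hSum {B V Pl ι : Type} (f : ι → Heap B V Pl) : Heap B V Pl :=
  fun c => ⨆ F : Finset ι, ∑ i ∈ F, f i c

/-- The canonical model construction `gmod(P, ρ, τ, ppos, cpos)`: the multiset
sum of `pm(P, ρ, τ, ppos, cpos, pos)` over all positions `pos`. -/
noncomputable def gmod {B V : Type} (ρ : List (B × V × V) → B → V → V)
    (P : Proc B V) (τ : List (B × V × V)) (pp cp : List Bool) :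
    Heap B V (List Bool) :=
  hSum (fun pos : List Bool => pm ρ P τ pp cp pos)

/-- Well-typedness of an input schedule. -/
def schedWT {B V : Type} (Ty : B → V → Set V) (ρ : List (B × V × V) → B → V → V) : Prop :=
  ∀ τ b v, ρ τ b v ∈ Ty b v

/-- The canonical model `cmod(P, ρ) = gmod(P, ρ, [], [], [])`. -/
noncomputable def cmod {B V : Type} (ρ : List (B × V × V) → B → V → V) (P : Proc B V) :
    Heap B V (List Bool) :=
  gmod ρ P [] [] []

/-- The canonical model with a token added at the previous place. -/
noncomputable def gmodTok {B V : Type} (ρ : List (B × V × V) → B → V → V)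
    (P : Proc B V) (τ : List (B × V × V)) (pp cp : List Bool) :
    Heap B V (List Bool) :=
  Heap.single (Chunk.token pp) + gmod ρ P τ pp cp

/-- The set `can(P)` of token-added canonical models over all well-typed schedules. -/
def canSet {B V : Type} (Ty : B → V → Set V) (P : Proc B V) :
    Set (Heap B V (List Bool)) :=
  {h | ∃ ρ, schedWT Ty ρ ∧ h = Heap.single (Chunk.token []) + cmod ρ P}

/-- The set of source places of I/O permissions in a heap. -/
def srcplaces {B V Pl : Type} (h : Heap B V Pl) : Set Pl :=
  {t | ∃ b v w t', 0 < h (Chunk.bio b t v w t')}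

/-- A heap is dead for a position if it has no tokens and no source place
extending the position. -/
def deadFor {B V : Type} (pos : List Bool) (h : Heap B V (List Bool)) : Prop :=
  (∀ t, h (Chunk.token t) = 0) ∧ ∀ p' ∈ srcplaces h, ¬ pos <+: p'

open Classical in
/-- The witness schedule `ρwit(σ)`: for proper prefixes `τ` of `σ`, return the
input of the next matching action of `σ`; otherwise an arbitrary well-typed value
(given by `pick`). -/
noncomputable def rhoWit {B V : Type} (pick : B → V → V) (σ : List (B × V × V)) :
    List (B × V × V) → B → V → V :=
  fun τ b v =>
    if h : ∃ w, ∃ rest, τ <+: σ ∧ σ.drop τ.length = (b, v, w) :: rest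
    then h.choose
    else pick b v

/-! A trace `σ` is replayed in the canonical model for the witness schedule `rhoWit pick σ`,
which answers every input exactly as `σ` does. Every heap reached along a prefix `τ` of `σ` has
the form `token(t) + gmod(P', τ, t, t) + g`, where `P'` is reachable from `P` along `τ` and `g`
holds no token and no permission whose source extends `t`. The token forces the next step to
consume a permission of `gmod` with source exactly `t`; such a permission sits at the end of a
choice path of `P'` to a prefix `bio(v, z).k`, and removing it leaves the canonical model of
`k w` at the fresh place `t ++ path ++ [true]` plus a remainder rooted elsewhere, which restores
the invariant while `P'` takes the matching step. Since the schedule agrees with `σ`, the step is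
never a `Contradict` step. -/

namespace Heap

variable {B V Pl : Type}

theorem single_apply_ne_top (c c' : Chunk B V Pl) : single c c' ≠ ⊤ := by
  unfold single; split <;> simp

theorem eq_of_single_apply_pos {c c' : Chunk B V Pl} (h : 0 < single c c') : c' = c := by
  by_contra hne
  simp [single, hne] at h

theorem add_left_cancel_single {c : Chunk B V Pl} {h h' : Heap B V Pl}
    (e : single c + h = single c + h') : h = h' :=
  funext fun c' => WithTop.add_left_cancel (single_apply_ne_top c c') (congrFun e c')

end Heap

section hSum

variable {B V Pl ι κ : Type}

protected theorem ENat.summable (f : ι → ℕ∞) : Summable f :=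
  ⟨_, hasSum_of_isLUB _ isLUB_iSup⟩

theorem hSum_apply (f : ι → Heap B V Pl) (c : Chunk B V Pl) : hSum f c = ∑' i, f i c :=
  (hasSum_of_isLUB _ isLUB_iSup).tsum_eq.symm

theorem hSum_apply_eq_zero_iff {f : ι → Heap B V Pl} {c : Chunk B V Pl} :
    hSum f c = 0 ↔ ∀ i, f i c = 0 := by
  rw [hSum_apply]
  exact (ENat.summable _).tsum_eq_zero_iff

theorem hSum_apply_pos_iff {f : ι → Heap B V Pl} {c : Chunk B V Pl} :
    0 < hSum f c ↔ ∃ i, 0 < f i c := by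
  simp only [pos_iff_ne_zero, ne_eq, hSum_apply_eq_zero_iff, not_forall]

theorem hSum_eq_add_add (f : ι → Heap B V Pl) {e : κ → ι} (he : e.Injective) {i : ι}
    (hi : i ∉ Set.range e) :
    hSum f = f i + hSum (f ∘ e) + hSum (fun j : ↥(insert i (Set.range e))ᶜ => f j) := by
  funext c
  simp only [Pi.add_apply, hSum_apply, Function.comp_apply]
  rw [← (ENat.summable _).tsum_add_tsum_compl (s := insert i (Set.range e)) (ENat.summable _)]
  congr 1
  rw [Set.insert_eq, (ENat.summable _).tsum_union_disjoint (f := fun j => f j c)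
      (Set.disjoint_singleton_left.2 hi) (ENat.summable _), tsum_singleton i (fun j => f j c),
    tsum_range (fun j => f j c) he]

end hSum

section deadFor

variable {B V : Type} {t t' : List Bool} {g g' : Heap B V (List Bool)}

theorem deadFor_zero : deadFor t (0 : Heap B V (List Bool)) :=
  ⟨fun _ => rfl, fun _ ⟨_, _, _, _, h⟩ => absurd h (lt_irrefl 0)⟩

theorem deadFor.add (hg : deadFor t g) (hg' : deadFor t g') : deadFor t (g + g') := by
  refine ⟨fun s => by simp [hg.1 s, hg'.1 s], fun s ⟨b, v, w, t₁, hpos⟩ => ?_⟩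
  rcases add_pos_iff.1 hpos with h | h
  · exact hg.2 s ⟨b, v, w, t₁, h⟩
  · exact hg'.2 s ⟨b, v, w, t₁, h⟩

theorem deadFor.mono (hg : deadFor t g) (htt' : t <+: t') : deadFor t' g :=
  ⟨hg.1, fun s hs hs' => hg.2 s hs (htt'.trans hs')⟩

theorem deadFor.apply_bio_eq_zero (hg : deadFor t g) {b : B} {s : List Bool} {v w : V}
    {t₁ : List Bool} (hs : t <+: s) : g (.bio b s v w t₁) = 0 := by
  by_contra h
  exact hg.2 s ⟨b, v, w, t₁, pos_iff_ne_zero.2 h⟩ hs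

end deadFor

section pm

variable {B V : Type} {ρ : List (B × V × V) → B → V → V}

inductive ChoicePath : Proc B V → List Bool → B → V → (V → Proc B V) → Prop
  | pre {P : Proc B V} {b : B} {v : V} {k : V → Proc B V} :
      PFunctor.M.dest P = ⟨.pre b v, k⟩ → ChoicePath P [] b v k
  | choice {P : Proc B V} {f : Bool → Proc B V} {d : Bool} {path : List Bool} {b : B} {v : V}
      {k : V → Proc B V} :
      PFunctor.M.dest P = ⟨.choice, f⟩ → ChoicePath (f d) path b v k →
        ChoicePath P (d :: path) b v k

theorem ChoicePath.ptrans {Ty : B → V → Set V} {P : Proc B V} {path : List Bool} {b : B}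
    {v w : V} {k : V → Proc B V} (h : ChoicePath P path b v k) (hw : w ∈ Ty b v) :
    PTrans Ty P (b, v, w) (k w) := by
  induction h with
  | pre hP => exact .pref hw hP
  | @choice _ _ d _ _ _ _ hP _ ih =>
    cases d
    · exact .chr hP (ih hw)
    · exact .chl hP (ih hw)

theorem pm_of_choicePath {P : Proc B V} {path : List Bool} {b : B} {v : V}
    {k : V → Proc B V} (h : ChoicePath P path b v k) (τ : List (B × V × V)) (pp cp : List Bool) :
    pm ρ P τ pp cp path = Heap.single (.bio b pp v (ρ τ b v) (cp ++ path ++ [true])) := by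
  induction h generalizing cp with
  | pre hP => simp [pm, hP]
  | choice hP _ ih => simp [pm, hP, ih]

theorem pm_append_of_choicePath {P : Proc B V} {path : List Bool} {b : B} {v : V}
    {k : V → Proc B V} (h : ChoicePath P path b v k) (τ : List (B × V × V))
    (pp cp q : List Bool) :
    pm ρ P τ pp cp (path ++ true :: q) =
      pm ρ (k (ρ τ b v)) (τ ++ [(b, v, ρ τ b v)]) (cp ++ path ++ [true])
        (cp ++ path ++ [true]) q := by
  induction h generalizing cp with
  | pre hP => simp [pm, hP]
  | choice hP _ ih => simp [pm, hP, ih]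

theorem pm_apply_token (P : Proc B V) (τ : List (B × V × V)) (pp cp pos s : List Bool) :
    pm ρ P τ pp cp pos (.token s) = 0 := by
  induction pos generalizing P τ pp cp with
  | nil => rcases hP : PFunctor.M.dest P with ⟨_ | _ | _, k⟩ <;> simp [pm, hP, Heap.single]
  | cons d pos ih =>
    rcases hP : PFunctor.M.dest P with ⟨_ | _ | _, k⟩ <;> cases d <;> simp only [pm, hP, Pi.zero_apply] <;>
      exact ih ..

theorem pm_apply_bio_pos {P : Proc B V} {τ : List (B × V × V)} {pp cp pos : List Bool} {b : B}
    {s : List Bool} {v w : V} {t' : List Bool} (h : 0 < pm ρ P τ pp cp pos (.bio b s v w t')) :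
    (s = pp ∧ ∃ k, ChoicePath P pos b v k) ∨ ∃ r ≠ [], r <+: pos ∧ s = cp ++ r := by
  induction pos generalizing P τ pp cp with
  | nil =>
    rcases hP : PFunctor.M.dest P with ⟨_ | ⟨b', v'⟩ | _, k⟩ <;> simp only [pm, hP] at h
    · exact absurd h (lt_irrefl 0)
    · obtain ⟨rfl, rfl, rfl, -, -⟩ := Chunk.bio.inj (Heap.eq_of_single_apply_pos h)
      exact .inl ⟨rfl, k, .pre hP⟩
    · exact absurd h (lt_irrefl 0)
  | cons d pos ih =>
    rcases hP : PFunctor.M.dest P with ⟨_ | ⟨b', v'⟩ | _, k⟩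
    · simp [pm, hP] at h
    · cases d
      · simp [pm, hP] at h
      simp only [pm, hP] at h
      rcases ih h with ⟨rfl, -⟩ | ⟨r, -, ⟨u, rfl⟩, rfl⟩
      · exact .inr ⟨[true], by simp, ⟨pos, rfl⟩, rfl⟩
      · exact .inr ⟨true :: r, by simp, ⟨u, rfl⟩, by simp⟩
    · simp only [pm, hP] at h
      rcases ih h with ⟨rfl, k', hk⟩ | ⟨r, -, ⟨u, rfl⟩, rfl⟩
      · exact .inl ⟨rfl, k', .choice hP hk⟩
      · exact .inr ⟨d :: r, by simp, ⟨u, rfl⟩, by simp⟩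

end pm

section gmod

variable {B V : Type} {ρ : List (B × V × V) → B → V → V}

theorem gmod_apply_token (P : Proc B V) (τ : List (B × V × V)) (pp cp s : List Bool) :
    gmod ρ P τ pp cp (.token s) = 0 :=
  hSum_apply_eq_zero_iff.2 fun _ => pm_apply_token ..

theorem gmod_eq_of_choicePath {P : Proc B V} {path : List Bool} {b : B} {v : V}
    {k : V → Proc B V} (h : ChoicePath P path b v k) (τ : List (B × V × V)) (t : List Bool) :
    ∃ R, deadFor (t ++ path ++ [true]) R ∧
      gmod ρ P τ t t = Heap.single (.bio b t v (ρ τ b v) (t ++ path ++ [true])) +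
        gmod ρ (k (ρ τ b v)) (τ ++ [(b, v, ρ τ b v)]) (t ++ path ++ [true])
          (t ++ path ++ [true]) + R := by
  set e : List Bool → List Bool := fun q => path ++ true :: q
  have he : e.Injective := fun _ _ hq => by simpa [e] using hq
  have hpath : path ∉ Set.range e := fun ⟨q, hq⟩ => by simpa [e] using congrArg List.length hq
  refine ⟨hSum (fun j : ↥(insert path (Set.range e))ᶜ => pm ρ P τ t t j), ⟨fun s => ?_, ?_⟩, ?_⟩
  · exact hSum_apply_eq_zero_iff.2 fun _ => pm_apply_token ..
  · rintro s ⟨b', v', w', t', hpos⟩ hpre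
    obtain ⟨⟨j, hj⟩, hpos⟩ := hSum_apply_pos_iff.1 hpos
    rcases pm_apply_bio_pos hpos with ⟨rfl, -⟩ | ⟨r, -, hr, rfl⟩
    · simpa using hpre.length_le
    · obtain ⟨u, rfl⟩ := ((List.prefix_append_right_inj t).1 (by simpa using hpre)).trans hr
      exact hj (Or.inr ⟨u, by simp [e]⟩)
  · rw [gmod, hSum_eq_add_add _ he hpath, pm_of_choicePath h]
    congr 3
    funext q
    exact pm_append_of_choicePath h τ t t q

theorem exists_of_gmodTok_add_eq {P : Proc B V} {τ : List (B × V × V)}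
    {t t₀ t₁ : List Bool} {g h₀ : Heap B V (List Bool)} {b : B} {v w : V} (hg : deadFor t g)
    (hH : gmodTok ρ P τ t t + g = Heap.single (.token t₀) + Heap.single (.bio b t₀ v w t₁) + h₀) :
    t₀ = t ∧ ∃ path k, ChoicePath P path b v k ∧ w = ρ τ b v ∧ t₁ = t ++ path ++ [true] ∧
      ∃ g', deadFor t₁ g' ∧ h₀ = gmod ρ (k w) (τ ++ [(b, v, w)]) t₁ t₁ + g' := by
  have ht₀ : t₀ = t := by
    by_contra hne
    have := congrFun hH (.token t₀)
    simp only [gmodTok, Pi.add_apply, Heap.single, Chunk.token.injEq, hne, ↓reduceIte,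
      gmod_apply_token, add_zero, hg.1, reduceCtorEq] at this
    exact one_ne_zero (add_eq_zero.1 this.symm).1
  subst ht₀
  have hc : 0 < gmod ρ P τ t₀ t₀ (.bio b t₀ v w t₁) := by
    have := congrFun hH (.bio b t₀ v w t₁)
    simp only [gmodTok, Pi.add_apply, Heap.single, reduceCtorEq, ↓reduceIte, zero_add,
      hg.apply_bio_eq_zero List.prefix_rfl, add_zero] at this
    exact this ▸ add_pos_of_pos_of_nonneg one_pos zero_le
  obtain ⟨pos, hpos⟩ := hSum_apply_pos_iff.1 hc
  rcases pm_apply_bio_pos hpos with ⟨-, k, hk⟩ | ⟨r, hr, -, hs⟩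
  swap
  · exact absurd (by simpa using hs) hr
  rw [pm_of_choicePath hk] at hpos
  obtain ⟨-, -, -, rfl, rfl⟩ := Chunk.bio.inj (Heap.eq_of_single_apply_pos hpos)
  obtain ⟨R, hR, hgmod⟩ := gmod_eq_of_choicePath (ρ := ρ) hk τ t₀
  refine ⟨rfl, pos, k, hk, rfl, rfl, R + g, hR.add (hg.mono ?_), ?_⟩
  · simp [List.append_assoc]
  apply Heap.add_left_cancel_single (c := .token t₀)
  apply Heap.add_left_cancel_single (c := .bio b t₀ v (ρ τ b v) (t₀ ++ pos ++ [true]))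
  rw [add_left_comm, ← add_assoc, ← hH, gmodTok, hgmod]
  abel

end gmod

section simulation

variable {B V : Type} {Ty : B → V → Set V} {ρ : List (B × V × V) → B → V → V}

theorem HTrans.wellTyped {Pl : Type} {s s' : Option (Heap B V Pl)} {a : B × V × V}
    (h : HTrans Ty s a s') : a.2.2 ∈ Ty a.1 a.2.1 := by
  cases h <;> assumption

theorem hES_mtrans_wellTyped {Pl : Type} {s s' : Option (Heap B V Pl)} {τ : List (B × V × V)}
    (h : (hES Ty).mtrans s τ s') : ∀ a ∈ τ, a.2.2 ∈ Ty a.1 a.2.1 := by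
  induction h with
  | nil => simp
  | snoc _ hstep ih =>
    simp only [List.mem_append, List.mem_singleton]
    rintro a (ha | rfl)
    · exact ih a ha
    · exact HTrans.wellTyped hstep

theorem exists_of_htrans_gmodTok {P : Proc B V} {τ : List (B × V × V)} {t : List Bool}
    {g : Heap B V (List Bool)} {a : B × V × V} {s' : Option (Heap B V (List Bool))}
    (hg : deadFor t g) (ha : ρ τ a.1 a.2.1 = a.2.2)
    (h : HTrans Ty (some (gmodTok ρ P τ t t + g)) a s') :
    ∃ P' t' g', PTrans Ty P a P' ∧ deadFor t' g' ∧
      s' = some (gmodTok ρ P' (τ ++ [a]) t' t' + g') := by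
  generalize hH : gmodTok ρ P τ t t + g = H at h
  cases h with
  | bio hw =>
    obtain ⟨rfl, path, k, hk, rfl, rfl, g', hg', rfl⟩ := exists_of_gmodTok_add_eq hg hH
    exact ⟨_, _, g', hk.ptrans hw, hg', by rw [gmodTok, add_assoc]⟩
  | contradict hne =>
    obtain ⟨-, -, -, -, rfl, -⟩ := exists_of_gmodTok_add_eq hg hH
    exact absurd ha hne

theorem exists_mtrans_of_mtrans_gmodTok {P : Proc B V} {τ : List (B × V × V)}
    {s' : Option (Heap B V (List Bool))}
    (hρ : ∀ τ' a, τ' ++ [a] <+: τ → ρ τ' a.1 a.2.1 = a.2.2)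
    (h : (hES Ty).mtrans (some (gmodTok ρ P [] [] [])) τ s') :
    ∃ P' t g, deadFor t g ∧ s' = some (gmodTok ρ P' τ t t + g) ∧ (pES Ty).mtrans P τ P' := by
  generalize hs₀ : some (gmodTok ρ P [] [] []) = s₀ at h
  induction h with
  | nil => exact ⟨P, [], 0, deadFor_zero, by rw [← hs₀, add_zero], .nil P⟩
  | snoc _ hstep ih =>
    obtain ⟨P', t, g, hg, rfl, hP'⟩ :=
      ih (fun τ' a hpre => hρ τ' a (hpre.trans (List.prefix_append _ _)))
    obtain ⟨P'', t', g', hP'', hg', rfl⟩ :=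
      exists_of_htrans_gmodTok hg (hρ _ _ List.prefix_rfl) hstep
    exact ⟨P'', t', g', hg', rfl, .snoc hP' hP''⟩

end simulation

section rhoWit

variable {B V : Type}

theorem rhoWit_eq_of_prefix {pick : B → V → V} {σ τ : List (B × V × V)} {a : B × V × V}
    (h : τ ++ [a] <+: σ) : rhoWit pick σ τ a.1 a.2.1 = a.2.2 := by
  obtain ⟨rest, hrest⟩ := h
  have hdrop : σ.drop τ.length = a :: rest := by simp [← hrest]
  have hex : ∃ w rest', τ <+: σ ∧ σ.drop τ.length = (a.1, a.2.1, w) :: rest' :=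
    ⟨a.2.2, rest, ⟨[a] ++ rest, by simp [← hrest]⟩, hdrop⟩
  rw [rhoWit, dif_pos hex]
  obtain ⟨_, -, h'⟩ := hex.choose_spec
  exact (congrArg (·.2.2) (List.cons.inj (hdrop.symm.trans h')).1).symm

theorem schedWT_rhoWit {Ty : B → V → Set V} {pick : B → V → V} {σ : List (B × V × V)}
    (hpick : ∀ b v, pick b v ∈ Ty b v) (hσ : ∀ a ∈ σ, a.2.2 ∈ Ty a.1 a.2.1) :
    schedWT Ty (rhoWit pick σ) := by
  intro τ b v
  unfold rhoWit
  split_ifs with hex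
  · obtain ⟨rest, -, hdrop⟩ := hex.choose_spec
    exact hσ _ (List.mem_of_mem_drop (hdrop ▸ List.mem_cons_self))
  · exact hpick b v

end rhoWit

/-- Every trace of the set of canonical models of a process `P` is a trace of
`P`: `tracesH(can(P)) ⊆ traces(P)`. -/
theorem can_traces_subset_proc {B V : Type} (Ty : B → V → Set V)
    (hne : ∀ b v, (Ty b v).Nonempty) (P : Proc B V) :
    tracesH Ty (canSet Ty P) ⊆ (pES Ty).tracesFrom P := by
  intro σ hσ
  choose pick hpick using hne
  have hσwt : ∀ a ∈ σ, a.2.2 ∈ Ty a.1 a.2.1 := by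
    obtain ⟨_, rfl, _, hrun⟩ := hσ _ ⟨fun _ => pick, fun _ => hpick, rfl⟩
    exact hES_mtrans_wellTyped hrun
  obtain ⟨_, rfl, _, hrun⟩ := hσ _ ⟨rhoWit pick σ, schedWT_rhoWit hpick hσwt, rfl⟩
  obtain ⟨P', -, -, -, -, hP'⟩ :=
    exists_mtrans_of_mtrans_gmodTok (fun _ _ => rhoWit_eq_of_prefix) hrun
  exact ⟨P, rfl, P', hP'⟩
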